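/- (Closure property, strengthened form) Let f : {0,1}^n → {0,1} be a Boolean function, i ∈ [n], and b ∈ {0,1}. If for every k ∈ U(f_{ib}) and every b' ∈ {0,1} we have i ∉ U(f_{k b'}), then U1(f, U(f_{ib})) ⊆ U(f_{ib}). -/

import Mathlib

/-- `f` depends on variable `i`: flipping the `i`-th coordinate of some input changes the value. -/
def BoolFnDependsOn {ι : Type*} [DecidableEq ι] (f : (ι → Bool) → Bool) (i : ι) : Prop :=
  ∃ a : ι → Bool, f (Function.update a i (!a i)) ≠ f a

/-- The restriction `f|_{x_j = b}`, a Boolean function on the remaining variables. -/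
def restrictBit {ι : Type*} [DecidableEq ι] (f : (ι → Bool) → Bool) (j : ι) (b : Bool) :
    ({i : ι // i ≠ j} → Bool) → Bool :=
  fun y => f (fun i => if h : i = j then b else y ⟨i, h⟩)

/-- `k ∈ U(f_{jb})`: variable `k` (a variable of `f_{jb}`, i.e. `k ≠ j`) is useless for the
restriction `f_{jb}`. -/
def UselessIn {ι : Type*} [DecidableEq ι] (f : (ι → Bool) → Bool) (j : ι) (b : Bool)
    (k : ι) : Prop :=
  ∃ h : k ≠ j, ¬ BoolFnDependsOn (restrictBit f j b) ⟨k, h⟩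

/-- `U(f_{ib})` as a set of indices in `[n]`. -/
def Uset {n : ℕ} (f : (Fin n → Bool) → Bool) (i : Fin n) (b : Bool) : Set (Fin n) :=
  {k | UselessIn f i b k}

/-- `U1(f, S) = ⋃_{j ∈ S} (U(f_{j0}) ∪ U(f_{j1}))`. -/
def U1 {n : ℕ} (f : (Fin n → Bool) → Bool) (S : Set (Fin n)) : Set (Fin n) :=
  ⋃ j ∈ S, (Uset f j false ∪ Uset f j true)

open Function

section Restriction

variable {ι : Type*} [DecidableEq ι]

theorem dite_update_eq_update_dite (j k : ι) (hk : k ≠ j) (b c : Bool)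
    (y : {i : ι // i ≠ j} → Bool) :
    (fun i => if h : i = j then b else update y ⟨k, hk⟩ c ⟨i, h⟩) =
      update (fun i => if h : i = j then b else y ⟨i, h⟩) k c := by
  funext i
  by_cases hij : i = j
  · subst hij
    simp [update_of_ne hk.symm]
  · by_cases hik : i = k
    · subst hik
      simp [hij]
    · simp [hij, hik, update, Subtype.ext_iff]

theorem dependsOn_restrictBit_iff (f : (ι → Bool) → Bool) (j k : ι) (hk : k ≠ j) (b : Bool) :
    BoolFnDependsOn (restrictBit f j b) ⟨k, hk⟩ ↔
      ∃ x : ι → Bool, x j = b ∧ f (update x k (!x k)) ≠ f x := by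
  constructor
  · rintro ⟨y, hy⟩
    refine ⟨fun i => if h : i = j then b else y ⟨i, h⟩, by simp, ?_⟩
    simpa [restrictBit, ← dite_update_eq_update_dite j k hk, hk] using hy
  · rintro ⟨x, rfl, hx⟩
    have hext : (fun i => if i = j then x j else x i) = x := by
      funext i; split_ifs with h <;> simp [h]
    refine ⟨fun i => x i, ?_⟩
    simpa [restrictBit, dite_update_eq_update_dite j k hk, hext] using hx

theorem uselessIn_iff (f : (ι → Bool) → Bool) (j : ι) (b : Bool) (k : ι) :
    UselessIn f j b k ↔ k ≠ j ∧ ∀ x : ι → Bool, x j = b → f (update x k (!x k)) = f x := by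
  simp [UselessIn, dependsOn_restrictBit_iff]

theorem UselessIn.trans {f : (ι → Bool) → Bool} {i j m : ι} {b b' : Bool}
    (hj : UselessIn f i b j) (hm : UselessIn f j b' m) (hmi : m ≠ i) :
    UselessIn f i b m := by
  rw [uselessIn_iff] at hj hm ⊢
  obtain ⟨-, hj⟩ := hj
  obtain ⟨hmj, hm⟩ := hm
  refine ⟨hmi, fun x hxi => ?_⟩
  by_cases hxj : x j = b'
  · exact hm x hxj
  -- Otherwise flip `x_j` to land in the half `x_j = b'`; this does not change `f`, since `x_i = b`.
  have hflips_comm : update (update x m (!x m)) j (!(update x m (!x m)) j) =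
      update (update x j (!x j)) m (!(update x j (!x j)) m) := by
    rw [update_of_ne hmj.symm, update_of_ne hmj, update_comm hmj]
  calc f (update x m (!x m))
      = f (update (update x m (!x m)) j (!(update x m (!x m)) j)) :=
        (hj _ (by rwa [update_of_ne hmi.symm])).symm
    _ = f (update (update x j (!x j)) m (!(update x j (!x j)) m)) := by rw [hflips_comm]
    _ = f (update x j (!x j)) :=
        hm _ (by rw [update_self]; exact (Bool.eq_not.mpr (Ne.symm hxj)).symm)
    _ = f x := hj x hxi

end Restriction

/-- Closure property, strengthened form: if no `k ∈ U(f_{ib})` has `i ∈ U(f_{k b'})` for any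
bit `b'`, then `U1(f, U(f_{ib})) ⊆ U(f_{ib})`. -/
theorem closure_property_strong (n : ℕ) (f : (Fin n → Bool) → Bool) (i : Fin n) (b : Bool)
    (h : ∀ k ∈ Uset f i b, ∀ b' : Bool, ¬ UselessIn f k b' i) :
    U1 f (Uset f i b) ⊆ Uset f i b := by
  intro m hm
  obtain ⟨j, hj, hm⟩ := Set.mem_iUnion₂.mp hm
  obtain ⟨b', hjm⟩ : ∃ b', UselessIn f j b' m := Bool.exists_bool.mpr hm
  have hmi : m ≠ i := by
    rintro rfl
    exact h j hj b' hjm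
  exact UselessIn.trans hj hjm hmi
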